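/- arXiv:0812.2552 — 3 statements merged into one kernel-verified Lean document; each statement's English description precedes it below -/
import Mathlib

section
/- For all r, r' with 2 ≤ r ≤ √7 and 2 ≤ r' ≤ √7, one has √7/7 ≤ ((r² - 4 + r'²)/(2r))/r' ≤ 5√7/14, and in particular this quotient lies strictly between 0 and 1. -/
theorem stmt_5 (r r' : ℝ) (h1 : 2 ≤ r) (h2 : r ≤ Real.sqrt 7)
    (h3 : 2 ≤ r') (h4 : r' ≤ Real.sqrt 7) :
    (Real.sqrt 7 / 7 ≤ ((r^2 - 4 + r'^2) / (2*r)) / r' ∧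
     ((r^2 - 4 + r'^2) / (2*r)) / r' ≤ 5 * Real.sqrt 7 / 14) ∧
    (0 < ((r^2 - 4 + r'^2) / (2*r)) / r' ∧ ((r^2 - 4 + r'^2) / (2*r)) / r' < 1) := by
  set s := Real.sqrt 7 with hs
  have hs2 : s ^ 2 = 7 := Real.sq_sqrt (by norm_num)
  have hsge : 2 ≤ s := by nlinarith [Real.sqrt_nonneg 7]
  have hr : (0:ℝ) < r := by linarith
  have hr' : (0:ℝ) < r' := by linarith
  have hden : (0:ℝ) < 2 * r * r' := by positivity
  have key : ((r^2 - 4 + r'^2) / (2*r)) / r' = (r^2 - 4 + r'^2) / (2*r*r') := by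
    rw [div_div]
  rw [key]
  refine ⟨⟨?_, ?_⟩, ?_, ?_⟩
  · rw [div_le_div_iff₀ (by norm_num) hden]
    nlinarith [sq_nonneg (r - r'), sq_nonneg (r - 2), sq_nonneg (r' - 2),
      mul_nonneg (sub_nonneg.2 h2) (sub_nonneg.2 h4),
      mul_nonneg (sub_nonneg.2 h1) (sub_nonneg.2 h3), sq_nonneg (s - 2)]
  · rw [div_le_div_iff₀ hden (by norm_num)]
    nlinarith [mul_nonneg (sub_nonneg.2 h2) (sub_nonneg.2 h4),
      mul_nonneg (sub_nonneg.2 h1) (sub_nonneg.2 h3),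
      mul_nonneg (sub_nonneg.2 h2) (sub_nonneg.2 h3),
      mul_nonneg (sub_nonneg.2 h1) (sub_nonneg.2 h4), sq_nonneg (r - r')]
  · apply div_pos _ hden
    nlinarith
  · rw [div_lt_one hden]
    nlinarith [mul_nonneg (sub_nonneg.2 h2) (sub_nonneg.2 h4),
      mul_nonneg (sub_nonneg.2 h1) (sub_nonneg.2 h3), sq_nonneg (r - r')]
end

section
/- For all r with 2 ≤ r ≤ √7, one has 3/2 < π - arccos((r² - 3)/(4r)) < 2. -/
open Real

theorem stmt_7 (r : ℝ) (h1 : 2 ≤ r) (h2 : r ≤ Real.sqrt 7) :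
    3/2 < Real.pi - Real.arccos ((r^2 - 3) / (4*r)) ∧
    Real.pi - Real.arccos ((r^2 - 3) / (4*r)) < 2 := by
  have hs : Real.sqrt 7 ^ 2 = 7 := Real.sq_sqrt (by norm_num)
  have hsnn : 0 ≤ Real.sqrt 7 := Real.sqrt_nonneg 7
  have hr0 : (0:ℝ) < 4 * r := by linarith
  set x : ℝ := (r^2 - 3) / (4*r) with hxdef
  have hx1 : 1/8 ≤ x := by
    rw [hxdef, le_div_iff₀ hr0]; nlinarith
  have hx2 : x ≤ Real.sqrt 7 / 7 := by
    rw [hxdef, div_le_div_iff₀ hr0 (by norm_num)]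
    nlinarith [sq_nonneg (r - Real.sqrt 7)]
  have hs3 : Real.sqrt 7 < 3 := by nlinarith
  have hxle : x ≤ 1 := by
    have : Real.sqrt 7 / 7 ≤ 1 := by linarith
    linarith
  have hxge : (-1:ℝ) ≤ x := by linarith
  have hcos : Real.cos (Real.arccos x) = x := Real.cos_arccos hxge hxle
  have hpi : (3:ℝ) < π := Real.pi_gt_three
  have hmemA : Real.arccos x ∈ Set.Icc 0 π :=
    ⟨Real.arccos_nonneg x, Real.arccos_le_pi x⟩
  -- cos 1 bounds from Taylor estimate
  have hb := Real.cos_bound (x := 1) (by norm_num)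
  rw [abs_sub_le_iff] at hb
  have hc1u : Real.cos 1 ≤ 53/96 := by norm_num at hb; linarith [hb.1]
  have hc1l : (0:ℝ) < Real.cos 1 := Real.cos_one_pos
  have hcos2 : Real.cos 2 = 2 * Real.cos 1 ^ 2 - 1 := by
    have := Real.cos_two_mul 1; norm_num at this; exact this
  have hc2 : Real.cos 2 ≤ -(3598/9216) := by
    nlinarith [sq_nonneg (Real.cos 1)]
  constructor
  · -- arccos x < π - 3/2
    have hmemB : π - 3/2 ∈ Set.Icc 0 π := ⟨by linarith, by linarith⟩
    have hcB : Real.cos (π - 3/2) < Real.cos (Real.arccos x) := by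
      rw [Real.cos_pi_sub, hcos]
      have : 0 < Real.cos (3/2) := Real.cos_pos_of_mem_Ioo ⟨by linarith, by linarith⟩
      linarith
    have := (Real.strictAntiOn_cos.lt_iff_gt hmemB hmemA).mp hcB
    linarith
  · -- π - 2 < arccos x
    have hmemB : π - 2 ∈ Set.Icc 0 π := ⟨by linarith, by linarith⟩
    have hcB : Real.cos (Real.arccos x) < Real.cos (π - 2) := by
      rw [Real.cos_pi_sub, hcos]
      -- need x < -cos 2 ; cos 2 ≤ -3598/9216 and x ≤ √7/7 < 3598/9216
      have hsx : Real.sqrt 7 / 7 < 3598/9216 := by nlinarith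
      linarith
    have := (Real.strictAntiOn_cos.lt_iff_gt hmemA hmemB).mp hcB
    linarith
end

section
/- For all r with 2 ≤ r ≤ √7 and all θ with arccos(√7/7) ≤ θ ≤ π, the quantity (r² + 3)(π - √7)(π - θ) / (r·(π - arccos((r²-3)/(4r)))²·√((9 - r²)(r² - 1))) lies in the interval [0, 5√3/9). -/
set_option maxHeartbeats 1000000 in
theorem stmt_10 (r θ : ℝ) (h1 : 2 ≤ r) (h2 : r ≤ Real.sqrt 7)
    (h3 : Real.arccos (Real.sqrt 7 / 7) ≤ θ) (h4 : θ ≤ Real.pi) :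
    0 ≤ (r^2 + 3) * (Real.pi - Real.sqrt 7) * (Real.pi - θ) /
      (r * (Real.pi - Real.arccos ((r^2 - 3) / (4*r)))^2 *
        Real.sqrt ((9 - r^2) * (r^2 - 1))) ∧
    (r^2 + 3) * (Real.pi - Real.sqrt 7) * (Real.pi - θ) /
      (r * (Real.pi - Real.arccos ((r^2 - 3) / (4*r)))^2 *
        Real.sqrt ((9 - r^2) * (r^2 - 1))) < 5 * Real.sqrt 3 / 9 := by
  have hpi1 : Real.pi < 3.1416 := by linarith [Real.pi_lt_d6]
  have hpi2 : (3.1415 : ℝ) < Real.pi := by linarith [Real.pi_gt_d6]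
  -- sqrt 7 bounds
  have hs7l : (2.6457 : ℝ) < Real.sqrt 7 := by
    rw [show (2.6457:ℝ) = Real.sqrt (2.6457^2) by
      rw [Real.sqrt_sq]; norm_num]
    apply Real.sqrt_lt_sqrt <;> norm_num
  have hs7u : Real.sqrt 7 < 2.646 := by
    rw [show (2.646:ℝ) = Real.sqrt (2.646^2) by
      rw [Real.sqrt_sq]; norm_num]
    apply Real.sqrt_lt_sqrt <;> norm_num
  -- sqrt 3 lower bound
  have hs3 : (1.732 : ℝ) < Real.sqrt 3 := by
    rw [show (1.732:ℝ) = Real.sqrt (1.732^2) by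
      rw [Real.sqrt_sq]; norm_num]
    apply Real.sqrt_lt_sqrt <;> norm_num
  have hr2 : 4 ≤ r^2 := by nlinarith
  have hr7 : r^2 ≤ 7 := by
    have : r^2 ≤ (Real.sqrt 7)^2 := by
      apply pow_le_pow_left₀ (by linarith) h2
    rwa [Real.sq_sqrt (by norm_num : (0:ℝ) ≤ 7)] at this
  -- arccos ((r^2-3)/(4r)) ≤ π/2
  have hargnn : 0 ≤ (r^2 - 3) / (4*r) := div_nonneg (by nlinarith) (by nlinarith)
  have hA : Real.arccos ((r^2 - 3) / (4*r)) ≤ Real.pi / 2 :=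
    Real.arccos_le_pi_div_two.mpr hargnn
  -- θ lower bound: arccos(√7/7) ≥ π/3
  have harc : Real.pi / 3 ≤ Real.arccos (Real.sqrt 7 / 7) := by
    have h12 : Real.arccos (1/2) = Real.pi / 3 := by
      rw [← Real.cos_pi_div_three]
      exact Real.arccos_cos (by positivity) (by linarith [Real.pi_pos])
    have hmono : Real.arcsin (Real.sqrt 7 / 7) ≤ Real.arcsin (1/2) :=
      Real.monotone_arcsin (by nlinarith)
    rw [← h12, Real.arccos_eq_pi_div_two_sub_arcsin, Real.arccos_eq_pi_div_two_sub_arcsin]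
    linarith
  have hθ : Real.pi - θ ≤ 2 * Real.pi / 3 := by linarith
  -- sqrt product lower bound
  have hprod : (12 : ℝ) ≤ (9 - r^2) * (r^2 - 1) := by nlinarith
  have hsp : (3.46 : ℝ) ≤ Real.sqrt ((9 - r^2) * (r^2 - 1)) := by
    rw [show (3.46:ℝ) = Real.sqrt (3.46^2) by
      rw [Real.sqrt_sq]; norm_num]
    apply Real.sqrt_le_sqrt; nlinarith
  set A := Real.arccos ((r^2 - 3) / (4*r)) with hA'
  set S := Real.sqrt ((9 - r^2) * (r^2 - 1)) with hS'
  have hSpos : 0 < S := by linarith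
  have hPA : (1.57 : ℝ) ≤ Real.pi - A := by linarith
  have hD : (17 : ℝ) ≤ r * (Real.pi - A)^2 * S := by
    have h1' : (2.46 : ℝ) ≤ (Real.pi - A)^2 := by nlinarith
    nlinarith [mul_le_mul h1' hsp (by norm_num) (by nlinarith)]
  have hDpos : 0 < r * (Real.pi - A)^2 * S := by linarith
  have hN : (r^2 + 3) * (Real.pi - Real.sqrt 7) * (Real.pi - θ) ≤ 10.5 := by
    have hf1 : (0:ℝ) ≤ r^2 + 3 := by positivity
    have hf2 : (0:ℝ) ≤ Real.pi - Real.sqrt 7 := by linarith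
    have hf3 : (0:ℝ) ≤ Real.pi - θ := by linarith
    have hb1 : r^2 + 3 ≤ 10 := by linarith
    have hb2 : Real.pi - Real.sqrt 7 ≤ 0.5 := by linarith
    have hb3 : Real.pi - θ ≤ 2.1 := by linarith
    nlinarith [mul_le_mul hb1 hb2 hf2 (by norm_num : (0:ℝ) ≤ 10),
      mul_nonneg hf1 hf2]
  constructor
  · apply div_nonneg _ (le_of_lt hDpos)
    have hf2 : (0:ℝ) ≤ Real.pi - Real.sqrt 7 := by linarith
    have hf3 : (0:ℝ) ≤ Real.pi - θ := by linarith
    positivity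
  · rw [div_lt_iff₀ hDpos]
    have hc : (0.96 : ℝ) < 5 * Real.sqrt 3 / 9 := by linarith
    nlinarith [mul_le_mul hD hc.le (by norm_num) (by linarith : (0:ℝ) ≤ r * (Real.pi - A)^2 * S)]
end
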